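/- arXiv:1704.00297 — 2 statements merged into one kernel-verified Lean document; each statement's English description precedes it below -/
import Mathlib

section
/- Let X = (S,p) be a finite probability space, n ∈ ℕ, and π ∈ Δ^{(n)}(S). Then the probability of the type class satisfies exp(−n·D(π‖p) − |S|·ln(n+1)) ≤ p^{⊗n}(T^{(n)}_π S) ≤ exp(−n·D(π‖p)). -/
/-!
For a sequence `xs` of type `π = k / n`,
`p^{⊗n}(xs) = ∏ₓ p(x)^{k(x)} = exp(-n D(π‖p)) π^{⊗n}(xs)`, hence
`p^{⊗n}(T_π) = exp(-n D(π‖p)) π^{⊗n}(T_π)`, and the upper bound is `π^{⊗n}(T_π) ≤ 1`. For the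
lower bound, comparing multinomial coefficients (`|T_c| ∏ c! = n!`) shows that `T_π` is the most
likely type class under `π^{⊗n}`; since the at most `(n+1)^{|S|}` type classes partition `S^n`, this
gives `1 ≤ (n+1)^{|S|} π^{⊗n}(T_π)`.
-/

open scoped Classical BigOperators
open Finset

noncomputable section

/-- A probability distribution on a finite set. -/
def IsDist {S : Type*} [Fintype S] (p : S → ℝ) : Prop :=
  (∀ x, 0 ≤ p x) ∧ ∑ x, p x = 1

/-- Shannon entropy (natural logarithm). -/
def ent {S : Type*} [Fintype S] (p : S → ℝ) : ℝ :=
  -∑ x, p x * Real.log (p x)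

/-- Relative entropy (Kullback–Leibler divergence). -/
def KL {S : Type*} [Fintype S] (p q : S → ℝ) : ℝ :=
  ∑ x, p x * Real.log (p x / q x)

/-- The n-fold product (Bernoulli) distribution. -/
def powDist {S : Type*} [Fintype S] (p : S → ℝ) (n : ℕ) : (Fin n → S) → ℝ :=
  fun f => ∏ i, p (f i)

/-- Tensor product of two distributions. -/
def prodDist {S T : Type*} [Fintype S] [Fintype T] (p : S → ℝ) (q : T → ℝ) :
    S × T → ℝ :=
  fun z => p z.1 * q z.2

/-- Empirical distribution of a sequence. -/
def emp {S : Type*} [Fintype S] {n : ℕ} (f : Fin n → S) : S → ℝ :=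
  fun a => ((univ.filter (fun i => f i = a)).card : ℝ) / n

/-- A coupling (joint distribution with given marginals). -/
def IsCoupling {S T : Type*} [Fintype S] [Fintype T]
    (w : S × T → ℝ) (p : S → ℝ) (q : T → ℝ) : Prop :=
  IsDist w ∧ (∀ x, ∑ y, w (x, y) = p x) ∧ (∀ y, ∑ x, w (x, y) = q y)

/-- The intrinsic Kolmogorov–Sinai distance. -/
def kdist {S T : Type*} [Fintype S] [Fintype T] (p : S → ℝ) (q : T → ℝ) : ℝ :=
  sInf {d : ℝ | ∃ w : S × T → ℝ, IsCoupling w p q ∧ d = 2 * ent w - ent p - ent q}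

end

open Nat in
theorem Nat.factorial_mul_pow_le_factorial_mul_pow (a b : ℕ) : a ! * a ^ b ≤ b ! * a ^ a := by
  rcases le_total a b with hab | hba
  · obtain ⟨d, rfl⟩ := Nat.exists_eq_add_of_le hab
    calc a ! * a ^ (a + d) = a ! * a ^ d * a ^ a := by ring
      _ ≤ a ! * (a + 1) ^ d * a ^ a := by gcongr; omega
      _ ≤ (a + d)! * a ^ a := by gcongr; exact Nat.factorial_mul_pow_le_factorial
  · calc a ! * a ^ b = b ! * a.descFactorial (a - b) * a ^ b := by
          rw [← Nat.factorial_mul_descFactorial (Nat.sub_le a b), Nat.sub_sub_self hba]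
      _ ≤ b ! * a ^ (a - b) * a ^ b := by gcongr; exact Nat.descFactorial_le_pow _ _
      _ = b ! * a ^ a := by rw [mul_assoc, ← pow_add, Nat.sub_add_cancel hba]

namespace MethodOfTypes

open MulAction Nat

variable {ι S : Type*} [Fintype ι]

noncomputable def counts (f : ι → S) (x : S) : ℕ := #{i | f i = x}

lemma card_subtype_eq_counts (f : ι → S) (x : S) :
    Fintype.card {i // f i = x} = counts f x :=
  Fintype.card_subtype _

lemma counts_le_card (f : ι → S) (x : S) : counts f x ≤ Fintype.card ι :=
  card_filter_le _ _

lemma counts_eq_iff_exists_perm {f g : ι → S} :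
    counts f = counts g ↔ ∃ σ : Equiv.Perm ι, g ∘ σ = f := by
  constructor
  · intro h
    have e : ∀ x, {i // f i = x} ≃ {i // g i = x} := fun x =>
      Fintype.equivOfCardEq (by rw [card_subtype_eq_counts, card_subtype_eq_counts, h])
    exact ⟨Equiv.ofFiberEquiv e, funext (Equiv.ofFiberEquiv_map e)⟩
  · rintro ⟨σ, rfl⟩
    funext x
    simp only [← card_subtype_eq_counts]
    exact Fintype.card_congr (σ.subtypeEquiv fun i => Iff.rfl)

variable [Fintype S]

-- A type class is indexed by its count vector `k = n • π` rather than by the distribution `π`.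
variable (ι) in
noncomputable def typeClass (k : S → ℕ) : Finset (ι → S) := {f | counts f = k}

lemma mem_typeClass {k : S → ℕ} {f : ι → S} : f ∈ typeClass ι k ↔ counts f = k := by
  simp [typeClass]

lemma sum_counts (f : ι → S) : ∑ x, counts f x = Fintype.card ι :=
  (card_eq_sum_card_fiberwise fun i _ => mem_univ (f i)).symm

lemma exists_counts_eq {k : S → ℕ} (hk : ∑ x, k x = Fintype.card ι) :
    ∃ g : ι → S, counts g = k := by
  let e : (Σ x, Fin (k x)) ≃ ι := Fintype.equivOfCardEq (by simp [hk])
  refine ⟨fun i => (e.symm i).1, funext fun x => ?_⟩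
  rw [← card_subtype_eq_counts,
    Fintype.card_congr (e.symm.subtypeEquiv (q := fun s => s.1 = x) fun _ => Iff.rfl),
    Fintype.card_congr (Equiv.sigmaSubtype x), Fintype.card_fin]

lemma prod_comp_eq_prod_pow_counts {M : Type*} [CommMonoid M] (q : S → M) (f : ι → S) :
    ∏ i, q (f i) = ∏ x, q x ^ counts f x :=
  (prod_fiberwise_of_maps_to (fun i _ => mem_univ (f i)) _).symm.trans <|
    prod_congr rfl fun x _ => prod_eq_pow_card fun i hi => by rw [(mem_filter.1 hi).2]

lemma coe_typeClass_counts_eq_orbit (g : ι → S) :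
    (typeClass ι (counts g) : Set (ι → S)) = orbit (Equiv.Perm ι)ᵈᵐᵃ g := by
  ext f
  rw [mem_coe, mem_typeClass, counts_eq_iff_exists_perm, mem_orbit_iff,
    DomMulAct.mk.surjective.exists]
  rfl

lemma card_typeClass_mul_prod_factorial {k : S → ℕ} (hk : ∑ x, k x = Fintype.card ι) :
    #(typeClass ι k) * ∏ x, (k x)! = (Fintype.card ι)! := by
  obtain ⟨g, rfl⟩ := exists_counts_eq hk
  have hstab : Nat.card (stabilizer (Equiv.Perm ι)ᵈᵐᵃ g) = ∏ x, (counts g x)! := by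
    rw [← Nat.card_congr (Equiv.subtypeEquiv (p := fun σ : Equiv.Perm ι => g ∘ σ = g)
      DomMulAct.mk fun _ => DomMulAct.mem_stabilizer_iff.symm),
      Nat.card_eq_fintype_card, DomMulAct.stabilizer_card]
    simp only [card_subtype_eq_counts]
  rw [← hstab, ← Set.ncard_coe_finset, coe_typeClass_counts_eq_orbit, ← index_stabilizer,
    mul_comm, Subgroup.card_mul_index, Nat.card_congr DomMulAct.mk.symm, Nat.card_perm,
    Nat.card_eq_fintype_card]

lemma card_image_counts_le :
    #(univ.image (counts : (ι → S) → S → ℕ)) ≤ (Fintype.card ι + 1) ^ Fintype.card S :=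
  calc #(univ.image (counts : (ι → S) → S → ℕ))
      ≤ #(Fintype.piFinset fun _ : S => range (Fintype.card ι + 1)) := by
        refine card_le_card fun c hc => ?_
        obtain ⟨f, -, rfl⟩ := mem_image.1 hc
        exact Fintype.mem_piFinset.2 fun x => mem_range.2 (lt_succ_of_le (counts_le_card f x))
    _ = (Fintype.card ι + 1) ^ Fintype.card S := by simp

lemma card_typeClass_mul_prod_pow_le {c k : S → ℕ} (hc : ∑ x, c x = Fintype.card ι)
    (hk : ∑ x, k x = Fintype.card ι) :
    #(typeClass ι c) * ∏ x, k x ^ c x ≤ #(typeClass ι k) * ∏ x, k x ^ k x := by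
  refine Nat.le_of_mul_le_mul_right ?_ (by positivity : 0 < (∏ x, (c x)!) * ∏ x, (k x)!)
  calc (#(typeClass ι c) * ∏ x, k x ^ c x) * ((∏ x, (c x)!) * ∏ x, (k x)!)
      = (Fintype.card ι)! * ∏ x, ((k x)! * k x ^ c x) := by
        rw [← card_typeClass_mul_prod_factorial hc, prod_mul_distrib]; ring
    _ ≤ (Fintype.card ι)! * ∏ x, ((c x)! * k x ^ k x) :=
        Nat.mul_le_mul_left _ <| prod_le_prod' fun x _ => factorial_mul_pow_le_factorial_mul_pow _ _
    _ = (#(typeClass ι k) * ∏ x, k x ^ k x) * ((∏ x, (c x)!) * ∏ x, (k x)!) := by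
        rw [← card_typeClass_mul_prod_factorial hk, prod_mul_distrib]; ring

section CommSemiring

variable {R : Type*} [CommSemiring R]

lemma sum_prod_comp_eq_pow (q : S → R) :
    ∑ f : ι → S, ∏ i, q (f i) = (∑ x, q x) ^ Fintype.card ι := by
  rw [← Fintype.prod_sum, prod_const, Finset.card_univ]

lemma sum_typeClass_prod_comp (q : S → R) (k : S → ℕ) :
    ∑ f ∈ typeClass ι k, ∏ i, q (f i) = #(typeClass ι k) * ∏ x, q x ^ k x := by
  rw [← nsmul_eq_mul, ← sum_const]
  exact sum_congr rfl fun f hf => by rw [prod_comp_eq_prod_pow_counts, mem_typeClass.1 hf]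

end CommSemiring

section Real

open Real

lemma sum_typeClass_prod_le_one {q : S → ℝ} (hq0 : ∀ x, 0 ≤ q x) (hq1 : ∑ x, q x = 1)
    (k : S → ℕ) : ∑ f ∈ typeClass ι k, ∏ i, q (f i) ≤ 1 :=
  calc ∑ f ∈ typeClass ι k, ∏ i, q (f i) ≤ ∑ f : ι → S, ∏ i, q (f i) :=
        sum_le_sum_of_subset_of_nonneg (subset_univ _) fun f _ _ => prod_nonneg fun i _ => hq0 _
    _ = 1 := by rw [sum_prod_comp_eq_pow, hq1, one_pow]

lemma sum_typeClass_prod_div_le {c k : S → ℕ} (hc : ∑ x, c x = Fintype.card ι)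
    (hk : ∑ x, k x = Fintype.card ι) :
    ∑ f ∈ typeClass ι c, ∏ i, (k (f i) : ℝ) / Fintype.card ι
      ≤ ∑ f ∈ typeClass ι k, ∏ i, (k (f i) : ℝ) / Fintype.card ι := by
  have hprod (m : S → ℕ) (hm : ∑ x, m x = Fintype.card ι) :
      ∏ x, ((k x : ℝ) / Fintype.card ι) ^ m x
        = (∏ x, k x ^ m x : ℕ) / (Fintype.card ι : ℝ) ^ Fintype.card ι := by
    rw [prod_congr rfl fun x _ => div_pow _ _ _, prod_div_distrib, prod_pow_eq_pow_sum, hm]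
    push_cast; rfl
  simp only [sum_typeClass_prod_comp fun x => (k x : ℝ) / Fintype.card ι]
  rw [hprod c hc, hprod k hk, ← mul_div_assoc, ← mul_div_assoc]
  exact div_le_div_of_nonneg_right (by exact_mod_cast card_typeClass_mul_prod_pow_le hc hk)
    (by positivity)

lemma one_le_card_add_one_pow_mul_sum_typeClass {k : S → ℕ} (hk : ∑ x, k x = Fintype.card ι) :
    1 ≤ ((Fintype.card ι : ℝ) + 1) ^ Fintype.card S
      * ∑ f ∈ typeClass ι k, ∏ i, (k (f i) : ℝ) / Fintype.card ι := by
  set P := fun c : S → ℕ => ∑ f ∈ typeClass ι c, ∏ i, (k (f i) : ℝ) / Fintype.card ι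
  have htotal : (∑ x, (k x : ℝ) / Fintype.card ι) ^ Fintype.card ι = 1 := by
    rcases eq_or_ne (Fintype.card ι) 0 with h | h
    · rw [h, pow_zero]
    · rw [← sum_div, ← Nat.cast_sum, hk, div_self (Nat.cast_ne_zero.2 h), one_pow]
  calc (1 : ℝ) = ∑ c ∈ univ.image counts, P c := by
        rw [← htotal, ← sum_prod_comp_eq_pow]
        exact (sum_fiberwise_of_maps_to (fun f _ => mem_image_of_mem _ (mem_univ f)) _).symm
    _ ≤ ∑ c ∈ univ.image counts, P k := by
        refine sum_le_sum fun c hc => ?_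
        obtain ⟨g, -, rfl⟩ := mem_image.1 hc
        exact sum_typeClass_prod_div_le (sum_counts g) hk
    _ = #(univ.image (counts : (ι → S) → S → ℕ)) * P k := by rw [sum_const, nsmul_eq_mul]
    _ ≤ ((Fintype.card ι : ℝ) + 1) ^ Fintype.card S * P k := by
        gcongr
        exact_mod_cast card_image_counts_le

lemma pow_eq_exp_mul_pow {p r N : ℝ} {m : ℕ} (hp : 0 < p) (hr : 0 ≤ r) (hm : (m : ℝ) = N * r) :
    p ^ m = exp (-N * (r * log (r / p))) * r ^ m := by
  rcases hr.eq_or_lt with rfl | hr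
  · obtain rfl : m = 0 := by exact_mod_cast hm.trans (mul_zero N)
    simp
  · rw [log_div hr.ne' hp.ne', show -N * (r * (log r - log p)) = m * log p - m * log r by
      rw [hm]; ring, exp_sub, exp_nat_mul, exp_nat_mul, exp_log hp, exp_log hr,
      div_mul_cancel₀ _ (pow_ne_zero _ hr.ne')]

lemma prod_pow_eq_exp_neg_mul_KL_mul {p q : S → ℝ} {N : ℝ} {k : S → ℕ} (hp : ∀ x, 0 < p x)
    (hq : ∀ x, 0 ≤ q x) (hk : ∀ x, (k x : ℝ) = N * q x) :
    ∏ x, p x ^ k x = exp (-N * KL q p) * ∏ x, q x ^ k x := by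
  rw [KL, mul_sum, exp_sum, ← prod_mul_distrib]
  exact prod_congr rfl fun x _ => pow_eq_exp_mul_pow (hp x) (hq x) (hk x)

lemma sum_typeClass_prod_eq_exp_neg_mul_KL_mul {p q : S → ℝ} {N : ℝ} {k : S → ℕ}
    (hp : ∀ x, 0 < p x) (hq : ∀ x, 0 ≤ q x) (hk : ∀ x, (k x : ℝ) = N * q x) :
    ∑ f ∈ typeClass ι k, ∏ i, p (f i)
      = exp (-N * KL q p) * ∑ f ∈ typeClass ι k, ∏ i, q (f i) := by
  rw [sum_typeClass_prod_comp, sum_typeClass_prod_comp, prod_pow_eq_exp_neg_mul_KL_mul hp hq hk,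
    mul_left_comm]

end Real

lemma emp_eq_div_iff {n : ℕ} (hn : n ≠ 0) {f : Fin n → S} {k : S → ℕ} :
    emp f = (fun x => (k x : ℝ) / n) ↔ counts f = k := by
  simp only [funext_iff, emp, counts, div_left_inj' (Nat.cast_ne_zero.2 hn : (n : ℝ) ≠ 0),
    Nat.cast_inj]

end MethodOfTypes

open MethodOfTypes

theorem stmt6_general {S : Type*} [Fintype S] (p : S → ℝ)
    (hpos : ∀ x, 0 < p x) (n : ℕ)
    (π : S → ℝ) (hπ : IsDist π) (hden : ∀ x, ∃ k : ℕ, π x = (k : ℝ) / n) :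
    Real.exp (-(n : ℝ) * KL π p - Fintype.card S * Real.log (n + 1))
        ≤ ∑ xs ∈ univ.filter (fun xs : Fin n → S => emp xs = π), powDist p n xs ∧
    ∑ xs ∈ univ.filter (fun xs : Fin n → S => emp xs = π), powDist p n xs
        ≤ Real.exp (-(n : ℝ) * KL π p) := by
  choose k hk using hden
  obtain rfl : π = fun x => (k x : ℝ) / n := funext hk
  have hn : n ≠ 0 := by rintro rfl; simpa using hπ.2
  have hq0 : ∀ x, 0 ≤ (k x : ℝ) / n := fun x => by positivity
  have hsum : ∑ x, k x = Fintype.card (Fin n) := by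
    rw [Fintype.card_fin]
    exact_mod_cast eq_of_div_eq_one (a := ((∑ x, k x : ℕ) : ℝ)) (b := n)
      (by rw [Nat.cast_sum, sum_div]; exact hπ.2)
  have hclass : univ.filter (fun xs : Fin n → S => emp xs = fun x => (k x : ℝ) / n)
      = typeClass (Fin n) k := by
    ext xs
    simp [emp_eq_div_iff hn, mem_typeClass]
  rw [hclass]
  simp only [powDist]
  rw [sum_typeClass_prod_eq_exp_neg_mul_KL_mul hpos hq0
    fun x => (mul_div_cancel₀ _ (Nat.cast_ne_zero.2 hn)).symm]
  refine ⟨?_, mul_le_of_le_one_right (Real.exp_pos _).le (sum_typeClass_prod_le_one hq0 hπ.2 k)⟩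
  have hlow := one_le_card_add_one_pow_mul_sum_typeClass hsum
  rw [Fintype.card_fin] at hlow
  rw [Real.exp_sub, Real.exp_nat_mul, Real.exp_log (by positivity), div_le_iff₀ (by positivity)]
  nlinarith [Real.exp_pos (-(n : ℝ) * KL (fun x => (k x : ℝ) / n) p)]

theorem stmt6 {S : Type*} [Fintype S] (p : S → ℝ) (hp : IsDist p)
    (hpos : ∀ x, 0 < p x) (n : ℕ) (hn : 0 < n)
    (π : S → ℝ) (hπ : IsDist π) (hden : ∀ x, ∃ k : ℕ, π x = (k : ℝ) / n) :
    Real.exp (-(n : ℝ) * KL π p - Fintype.card S * Real.log (n + 1))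
        ≤ ∑ xs ∈ univ.filter (fun xs : Fin n → S => emp xs = π), powDist p n xs ∧
    ∑ xs ∈ univ.filter (fun xs : Fin n → S => emp xs = π), powDist p n xs
        ≤ Real.exp (-(n : ℝ) * KL π p) :=
  stmt6_general p hpos n π hπ hden
end

section
/- The tensor product of finite probability spaces is 1-Lipschitz in each argument with respect to the intrinsic Kolmogorov–Sinai distance: for finite probability spaces X, Y, Y', one has k(X⊗Y, X⊗Y') ≤ k(Y, Y'). -/
open scoped Classical BigOperators
open Finset

/-!
Any coupling `w` of `q` and `q'` lifts to the coupling of `p ⊗ q` and `p ⊗ q'` that draws the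
common `S`-coordinate from `p` and the remaining pair from `w`. This lift has entropy
`ent p + ent w`, so by additivity of entropy it has the same cost `2 ent w - ent q - ent q'`;
taking the infimum over `w` gives the inequality.
-/

open Real

section Entropy

variable {S T : Type*} [Fintype S] [Fintype T]

lemma ent_eq_sum_negMulLog (p : S → ℝ) : ent p = ∑ x, negMulLog (p x) := by
  simp [ent, negMulLog, Finset.sum_neg_distrib]

lemma IsDist.le_one {p : S → ℝ} (hp : IsDist p) (x : S) : p x ≤ 1 :=
  hp.2 ▸ Finset.single_le_sum (fun i _ => hp.1 i) (Finset.mem_univ x)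

lemma IsDist.ent_nonneg {p : S → ℝ} (hp : IsDist p) : 0 ≤ ent p := by
  rw [ent_eq_sum_negMulLog]
  exact Finset.sum_nonneg fun x _ => negMulLog_nonneg (hp.1 x) (hp.le_one x)

lemma ent_le_card_sub_sum {p : S → ℝ} (hp : ∀ x, 0 ≤ p x) :
    ent p ≤ Fintype.card S - ∑ x, p x := by
  rw [ent_eq_sum_negMulLog]
  calc ∑ x, negMulLog (p x) ≤ ∑ x, (1 - p x) :=
        Finset.sum_le_sum fun x _ => negMulLog_le_one_sub_self (hp x)
    _ = Fintype.card S - ∑ x, p x := by simp [Finset.sum_sub_distrib]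

lemma isDist_prodDist {p : S → ℝ} {q : T → ℝ} (hp : IsDist p) (hq : IsDist q) :
    IsDist (prodDist p q) :=
  ⟨fun z => mul_nonneg (hp.1 _) (hq.1 _), by
    simp [prodDist, Fintype.sum_prod_type, ← Finset.mul_sum, hp.2, hq.2]⟩

lemma isCoupling_prodDist {p : S → ℝ} {q : T → ℝ} (hp : IsDist p) (hq : IsDist q) :
    IsCoupling (prodDist p q) p q :=
  ⟨isDist_prodDist hp hq, fun x => by simp [prodDist, ← Finset.mul_sum, hq.2],
    fun y => by simp [prodDist, ← Finset.sum_mul, hp.2]⟩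

lemma ent_prodDist {p : S → ℝ} {q : T → ℝ} (hp : IsDist p) (hq : IsDist q) :
    ent (prodDist p q) = ent p + ent q := by
  simp only [ent_eq_sum_negMulLog, prodDist, negMulLog_mul, Fintype.sum_prod_type,
    Finset.sum_add_distrib, ← Finset.mul_sum, ← Finset.sum_mul, hp.2, hq.2, one_mul]

end Entropy

section Kdist

variable {S T : Type*} [Fintype S] [Fintype T] {p : S → ℝ} {q : T → ℝ}

lemma kdist_le_of_isCoupling (hp : ∀ x, 0 ≤ p x) (hq : ∀ y, 0 ≤ q y) {w : S × T → ℝ}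
    (hw : IsCoupling w p q) : kdist p q ≤ 2 * ent w - ent p - ent q := by
  refine csInf_le ⟨2 - Fintype.card S - Fintype.card T, ?_⟩ ⟨w, hw, rfl⟩
  rintro _ ⟨v, ⟨hv, hvp, hvq⟩, rfl⟩
  have hp_le := ent_le_card_sub_sum hp
  have hq_le := ent_le_card_sub_sum hq
  -- both marginals carry the total mass of `v`, which is 1
  have hp_sum : ∑ x, p x = 1 := by simp only [← hvp, ← Fintype.sum_prod_type', hv.2]
  have hq_sum : ∑ y, q y = 1 := by
    simp only [← hvq, ← Fintype.sum_prod_type_right', hv.2]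
  linarith [hv.ent_nonneg]

lemma le_kdist_of_forall_isCoupling (hp : IsDist p) (hq : IsDist q) {c : ℝ}
    (h : ∀ w, IsCoupling w p q → c ≤ 2 * ent w - ent p - ent q) : c ≤ kdist p q :=
  le_csInf ⟨_, _, isCoupling_prodDist hp hq, rfl⟩ (by rintro _ ⟨w, hw, rfl⟩; exact h w hw)

end Kdist

section DiagCoupling

variable {S T T' : Type*} [DecidableEq S]

/-- The law of `((X, Y), (X, Y'))` for independent `X ∼ p` and `(Y, Y') ∼ w`. -/
noncomputable def diagCoupling (p : S → ℝ) (w : T × T' → ℝ) : (S × T) × (S × T') → ℝ :=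
  fun z => if z.1.1 = z.2.1 then p z.1.1 * w (z.1.2, z.2.2) else 0

variable (p : S → ℝ) (w : T × T' → ℝ)

lemma sum_diagCoupling_left [Fintype S] [Fintype T'] (a : S × T) :
    ∑ b, diagCoupling p w (a, b) = p a.1 * ∑ y', w (a.2, y') := by
  simp [diagCoupling, Fintype.sum_prod_type, Finset.mul_sum]

lemma sum_diagCoupling_right [Fintype S] [Fintype T] (b : S × T') :
    ∑ a, diagCoupling p w (a, b) = p b.1 * ∑ y, w (y, b.2) := by
  simp [diagCoupling, Fintype.sum_prod_type, Finset.mul_sum]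

variable [Fintype S] [Fintype T] [Fintype T']

lemma ent_diagCoupling : ent (diagCoupling p w) = ent (prodDist p w) := by
  simp only [ent_eq_sum_negMulLog]
  symm
  refine Fintype.sum_of_injective (fun z => ((z.1, z.2.1), (z.1, z.2.2))) ?_ _ _ ?_ ?_
  · rintro ⟨x, y, y'⟩ ⟨_, _, _⟩ h
    simp_all
  · rintro ⟨⟨x, y⟩, ⟨x', y'⟩⟩ hz
    have hx : x ≠ x' := by rintro rfl; exact hz ⟨(x, y, y'), rfl⟩
    simp [diagCoupling, hx]
  · intro z
    simp [diagCoupling, prodDist]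

lemma isCoupling_diagCoupling {p : S → ℝ} {q : T → ℝ} {q' : T' → ℝ} {w : T × T' → ℝ}
    (hp : IsDist p) (hq : IsDist q) (hw : IsCoupling w q q') :
    IsCoupling (diagCoupling p w) (prodDist p q) (prodDist p q') := by
  obtain ⟨hwD, hwq, hwq'⟩ := hw
  have hleft : ∀ a, ∑ b, diagCoupling p w (a, b) = prodDist p q a := fun a => by
    rw [sum_diagCoupling_left, hwq]; rfl
  refine ⟨⟨fun z => ?_, ?_⟩, hleft, fun b => ?_⟩
  · unfold diagCoupling
    split_ifs
    exacts [mul_nonneg (hp.1 _) (hwD.1 _), le_rfl]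
  · rw [Fintype.sum_prod_type]
    simp only [hleft, (isDist_prodDist hp hq).2]
  · rw [sum_diagCoupling_right, hwq']; rfl

end DiagCoupling

theorem stmt11 {S T T' : Type*} [Fintype S] [Fintype T] [Fintype T']
    (p : S → ℝ) (q : T → ℝ) (q' : T' → ℝ)
    (hp : IsDist p) (hq : IsDist q) (hq' : IsDist q') :
    kdist (prodDist p q) (prodDist p q') ≤ kdist q q' := by
  refine le_kdist_of_forall_isCoupling hq hq' fun w hw => ?_
  calc kdist (prodDist p q) (prodDist p q')
      ≤ 2 * ent (diagCoupling p w) - ent (prodDist p q) - ent (prodDist p q') :=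
        kdist_le_of_isCoupling (isDist_prodDist hp hq).1 (isDist_prodDist hp hq').1
          (isCoupling_diagCoupling hp hq hw)
    _ = 2 * ent w - ent q - ent q' := by
        rw [ent_diagCoupling, ent_prodDist hp hw.1, ent_prodDist hp hq, ent_prodDist hp hq']
        ring
end
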